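/- Fix real parameters α, ξ, ν and let u be an (α,ξ,ν)-eigenfunction. Then for every real polynomial p, with w := 2pu' − p'u, one has ∫₀^∞ ( −w''(t) + ((ξ−t)² + 1 − ν)w(t) ) u(t) dt = u(0)² ( −p''(0) + 2p'(0)(α−ξ) + 2p(0)( ξ² + 1 − ν − (α−ξ)² ) ). -/

import Mathlib

/-! On `[0,∞)` the eigenvalue equation gives `((ξ−t)² + 1 − ν) u = u''`, so the integrand is
`u''w − w''u`, the derivative of `u'w − w'u`. Since `u` and `w = 2pu' − p'u` decay rapidly with
all their derivatives, the integral is the boundary term `w'(0)u(0) − u'(0)w(0)`, and the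
eigenvalue equation and the Robin condition at `0` express it through `u(0)²`. -/

open MeasureTheory Polynomial

/-- An `(α,ξ,ν)`-eigenfunction: a smooth function on `ℝ` which, together with all its
derivatives, decays faster than any polynomial on `[0,∞)`, solves
`−u'' + ((ξ−t)² + 1)u = νu` on `[0,∞)`, and satisfies the Robin condition
`u'(0) = (α−ξ)u(0)`. -/
def IsEigen (α ξ ν : ℝ) (u : ℝ → ℝ) : Prop :=
  ContDiff ℝ (⊤ : ℕ∞) u ∧
  (∀ n k : ℕ, ∃ C : ℝ, ∀ t : ℝ, 0 ≤ t → |t| ^ k * |iteratedDeriv n u t| ≤ C) ∧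
  (∀ t : ℝ, 0 ≤ t → -(deriv (deriv u) t) + ((ξ - t) ^ 2 + 1) * u t = ν * u t) ∧
  deriv u 0 = (α - ξ) * u 0

open Asymptotics Filter Set
open scoped ContDiff

theorem Polynomial.contDiff_eval {𝕜 : Type*} [NontriviallyNormedField 𝕜] (p : 𝕜[X])
    (n : WithTop ℕ∞) : ContDiff 𝕜 n fun x => p.eval x :=
  contDiff_aeval p n

theorem Asymptotics.SuperpolynomialDecay.sub {α β : Type*} [TopologicalSpace β] [CommRing β]
    [IsTopologicalRing β] {l : Filter α} {k f g : α → β} (hf : SuperpolynomialDecay l k f)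
    (hg : SuperpolynomialDecay l k g) : SuperpolynomialDecay l k (f - g) := fun n => by
  simpa [mul_sub] using (hf n).sub (hg n)

theorem Asymptotics.SuperpolynomialDecay.integrableOn_Ioi {f : ℝ → ℝ} (hc : Continuous f)
    (hf : SuperpolynomialDecay atTop id f) (a : ℝ) : IntegrableOn f (Ioi a) := by
  have ho : f =O[atTop] fun t : ℝ => t ^ (-2 : ℝ) := by
    simpa [← Real.rpow_intCast] using (superpolynomialDecay_iff_isBigO f tendsto_id).1 hf (-2)
  exact ((hc.locallyIntegrable.locallyIntegrableOn _).integrableOn_of_isBigO_atTop ho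
    (integrableAtFilter_rpow_atTop_iff.2 (by norm_num))).mono_set Ioi_subset_Ici_self

def IsSchwartzAtTop (f : ℝ → ℝ) : Prop :=
  ContDiff ℝ ∞ f ∧ ∀ n : ℕ, SuperpolynomialDecay atTop id (iteratedDeriv n f)

namespace IsSchwartzAtTop

variable {f g : ℝ → ℝ}

theorem of_abs_pow_mul_le (hf : ContDiff ℝ ∞ f)
    (hbound : ∀ n k : ℕ, ∃ C : ℝ, ∀ t : ℝ, 0 ≤ t → |t| ^ k * |iteratedDeriv n f t| ≤ C) :
    IsSchwartzAtTop f := by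
  refine ⟨hf, fun n => (superpolynomialDecay_iff_abs_isBoundedUnder _ tendsto_id).2 fun k => ?_⟩
  obtain ⟨C, hC⟩ := hbound n k
  refine isBoundedUnder_of_eventually_le (a := C) ?_
  filter_upwards [eventually_ge_atTop 0] with t ht
  simpa [abs_mul] using hC t ht

theorem contDiffAt (hf : IsSchwartzAtTop f) (n : ℕ) (x : ℝ) : ContDiffAt ℝ n f x :=
  (contDiff_infty.1 hf.1 n).contDiffAt

theorem superpolynomialDecay (hf : IsSchwartzAtTop f) : SuperpolynomialDecay atTop id f := by
  simpa using hf.2 0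

theorem differentiable (hf : IsSchwartzAtTop f) : Differentiable ℝ f :=
  (contDiff_infty_iff_deriv.1 hf.1).1

theorem continuous (hf : IsSchwartzAtTop f) : Continuous f :=
  hf.differentiable.continuous

protected theorem deriv (hf : IsSchwartzAtTop f) : IsSchwartzAtTop (_root_.deriv f) :=
  ⟨(contDiff_infty_iff_deriv.1 hf.1).2, fun n => by
    simpa [← iteratedDeriv_succ'] using hf.2 (n + 1)⟩

theorem sub (hf : IsSchwartzAtTop f) (hg : IsSchwartzAtTop g) :
    IsSchwartzAtTop fun t => f t - g t := by
  refine ⟨hf.1.sub hg.1, fun n => ((hf.2 n).sub (hg.2 n)).congr fun t => ?_⟩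
  rw [iteratedDeriv_fun_sub (hf.contDiffAt n t) (hg.contDiffAt n t)]
  rfl

theorem polynomial_mul (hf : IsSchwartzAtTop f) (p : ℝ[X]) :
    IsSchwartzAtTop fun t => p.eval t * f t := by
  refine ⟨(p.contDiff_eval ∞).mul hf.1, fun n => ?_⟩
  induction n generalizing p f with
  | zero => simpa using hf.superpolynomialDecay.polynomial_mul p
  | succ n ih =>
    have hderiv : _root_.deriv (fun t => p.eval t * f t)
        = fun t => (derivative p).eval t * f t + p.eval t * _root_.deriv f t :=
      funext fun t => ((p.hasDerivAt t).mul (hf.differentiable t).hasDerivAt).deriv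
    rw [iteratedDeriv_succ', hderiv]
    refine ((ih hf (derivative p)).add (ih hf.deriv p)).congr fun t => ?_
    rw [iteratedDeriv_fun_add
      (((derivative p).contDiff_eval n).mul (contDiff_infty.1 hf.1 n)).contDiffAt
      ((p.contDiff_eval n).mul (contDiff_infty.1 hf.deriv.1 n)).contDiffAt]
    rfl

theorem integral_Ioi_deriv_deriv_mul_sub (hf : IsSchwartzAtTop f) (hg : IsSchwartzAtTop g)
    (a : ℝ) :
    ∫ t in Ioi a, (deriv (deriv f) t * g t - deriv (deriv g) t * f t)
      = deriv g a * f a - deriv f a * g a := by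
  have hF : ∀ t, HasDerivAt (fun s => deriv f s * g s - deriv g s * f s)
      (deriv (deriv f) t * g t - deriv (deriv g) t * f t) t := fun t =>
    (((hf.deriv.differentiable t).hasDerivAt.mul (hg.differentiable t).hasDerivAt).sub
      ((hg.deriv.differentiable t).hasDerivAt.mul (hf.differentiable t).hasDerivAt)).congr_deriv
      (by ring)
  have hdecay : SuperpolynomialDecay atTop id fun s => deriv f s * g s - deriv g s * f s :=
    (hf.deriv.superpolynomialDecay.mul hg.superpolynomialDecay).sub
      (hg.deriv.superpolynomialDecay.mul hf.superpolynomialDecay)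
  have hint : IntegrableOn (fun t => deriv (deriv f) t * g t - deriv (deriv g) t * f t) (Ioi a) :=
    ((hf.deriv.deriv.superpolynomialDecay.mul hg.superpolynomialDecay).sub
        (hg.deriv.deriv.superpolynomialDecay.mul hf.superpolynomialDecay)).integrableOn_Ioi
      ((hf.deriv.deriv.continuous.mul hg.continuous).sub
        (hg.deriv.deriv.continuous.mul hf.continuous)) a
  rw [integral_Ioi_of_hasDerivAt_of_tendsto (hF a).continuousAt.continuousWithinAt
    (fun t _ => hF t) hint (by simpa using hdecay 0)]
  ring

end IsSchwartzAtTop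

theorem IsEigen.isSchwartzAtTop {α ξ ν : ℝ} {u : ℝ → ℝ} (hu : IsEigen α ξ ν u) :
    IsSchwartzAtTop u :=
  .of_abs_pow_mul_le hu.1 hu.2.1

theorem polynomial_commutator_integral
    (α ξ ν : ℝ) (u : ℝ → ℝ) (hu : IsEigen α ξ ν u) (p : Polynomial ℝ) :
    ∫ t in Set.Ioi (0 : ℝ),
        (-(deriv (deriv (fun s : ℝ =>
              2 * p.eval s * deriv u s - (Polynomial.derivative p).eval s * u s)) t)
          + ((ξ - t) ^ 2 + 1 - ν) *
              (2 * p.eval t * deriv u t - (Polynomial.derivative p).eval t * u t)) * u t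
      = u 0 ^ 2 *
          (-((Polynomial.derivative (Polynomial.derivative p)).eval 0)
            + 2 * (Polynomial.derivative p).eval 0 * (α - ξ)
            + 2 * p.eval 0 * (ξ ^ 2 + 1 - ν - (α - ξ) ^ 2)) := by
  set w : ℝ → ℝ := fun s => 2 * p.eval s * deriv u s - (derivative p).eval s * u s
  have hU := hu.isSchwartzAtTop
  have hW : IsSchwartzAtTop w := by
    convert (hU.deriv.polynomial_mul (C 2 * p)).sub (hU.polynomial_mul (derivative p)) using 4
    rw [eval_mul, eval_C]
  obtain ⟨-, -, hode, hrobin⟩ := hu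
  have hintegrand : EqOn (fun t => (-deriv (deriv w) t + ((ξ - t) ^ 2 + 1 - ν) * w t) * u t)
      (fun t => deriv (deriv u) t * w t - deriv (deriv w) t * u t) (Ioi 0) := fun t ht => by
    linear_combination w t * hode t (le_of_lt ht)
  rw [setIntegral_congr_fun measurableSet_Ioi hintegrand, hU.integral_Ioi_deriv_deriv_mul_sub hW]
  have hw' : deriv w 0 = 2 * (derivative p).eval 0 * deriv u 0 + 2 * p.eval 0 * deriv (deriv u) 0
      - ((derivative (derivative p)).eval 0 * u 0 + (derivative p).eval 0 * deriv u 0) :=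
    (((p.hasDerivAt 0).const_mul 2 |>.mul (hU.deriv.differentiable 0).hasDerivAt).sub
      (((derivative p).hasDerivAt 0).mul (hU.differentiable 0).hasDerivAt)).deriv
  have hu'' : deriv (deriv u) 0 = (ξ ^ 2 + 1 - ν) * u 0 := by linear_combination -hode 0 le_rfl
  simp only [w, hw', hrobin, hu'']
  ring
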